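/- arXiv:1902.06965 — 9 statements merged into one kernel-verified Lean document; each statement's English description precedes it below -/
import Mathlib

section
/- Let μ_p and μ_u be probability measures on a measurable space X with μ_p ≪ μ_u, let g : X → Y be a measurable map into a measurable space Y, and let h : Y → ℝ≥0∞ be measurable. If the Radon–Nikodym derivative satisfies (dμ_p/dμ_u)(x) = h(g(x)) for μ_u-almost every x, then the pushforward measures satisfy μ_p.map g ≪ μ_u.map g, and the Radon–Nikodym derivative of the pushforwards satisfies d(μ_p.map g)/d(μ_u.map g)(y) = h(y) for (μ_u.map g)-almost every y. -/
open MeasureTheory ENNReal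

/-- Abstract form of the paper's Lemma 1: if the Radon–Nikodym derivative
`dμp/dμu` factors through a measurable map `g` as `h ∘ g`, then the pushforward
measures satisfy `μp.map g ≪ μu.map g` and their Radon–Nikodym derivative is `h`
almost everywhere. -/
theorem ntc_pushforward_rnDeriv {X Y : Type*} [MeasurableSpace X] [MeasurableSpace Y]
    (μp μu : Measure X) [IsProbabilityMeasure μp] [IsProbabilityMeasure μu]
    (hac : μp ≪ μu) (g : X → Y) (hg : Measurable g) (h : Y → ℝ≥0∞) (hh : Measurable h)
    (hfac : ∀ᵐ x ∂μu, μp.rnDeriv μu x = h (g x)) :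
    μp.map g ≪ μu.map g ∧
      ∀ᵐ y ∂(μu.map g), (μp.map g).rnDeriv (μu.map g) y = h y := by
  have hprob : IsProbabilityMeasure (μu.map g) := Measure.isProbabilityMeasure_map hg.aemeasurable
  have key : μp.map g = (μu.map g).withDensity h := by
    ext s hs
    rw [Measure.map_apply hg hs, withDensity_apply _ hs,
      setLIntegral_map hs hh hg,
      ← Measure.setLIntegral_rnDeriv hac (g ⁻¹' s)]
    exact lintegral_congr_ae (ae_restrict_of_ae hfac)
  refine ⟨key ▸ withDensity_absolutelyContinuous _ _, ?_⟩
  rw [key]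
  exact Measure.rnDeriv_withDensity _ hh
end

section
/- The pushforward measures along the NTC satisfy μ_p.map g ≪ μ_u.map g, and for (μ_u.map g)-almost every y ∈ [0,1], the Radon–Nikodym derivative satisfies d(μ_p.map g)/d(μ_u.map g)(y) = y/(1−y). -/
open MeasureTheory ENNReal NNReal

/-!
Off the set where `f_u` vanishes, which is `ν`-null for `f_p` as well because `μ_p ≪ μ_u`,
the density `f_p / f_u` of `μ_p` with respect to `μ_u` equals `g / (1 - g)`: it factors
through `g`. A density of the form `φ ∘ g` pushes forward along `g` to the density `φ`.
-/

theorem MeasureTheory.Measure.map_withDensity_comp {α β : Type*} [MeasurableSpace α]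
    [MeasurableSpace β] (μ : Measure α) {g : α → β} (hg : Measurable g) {f : β → ℝ≥0∞}
    (hf : Measurable f) :
    (μ.withDensity (f ∘ g)).map g = (μ.map g).withDensity f := by
  ext s hs
  rw [Measure.map_apply hg hs, withDensity_apply _ (hg hs), withDensity_apply _ hs,
    setLIntegral_map hs hf hg, Function.comp_def]

theorem MeasureTheory.ae_imp_eq_zero_of_withDensity_absolutelyContinuous {α : Type*}
    [MeasurableSpace α] {ν : Measure α} {f g : α → ℝ≥0∞} (hf : Measurable f)
    (hg : Measurable g) (hac : ν.withDensity f ≪ ν.withDensity g) :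
    ∀ᵐ x ∂ν, g x = 0 → f x = 0 := by
  have hS : MeasurableSet {x | g x = 0} := hg (measurableSet_singleton 0)
  have hgS : ν.withDensity g {x | g x = 0} = 0 := by
    rw [withDensity_apply _ hS, setLIntegral_eq_zero_iff hS hg]
    exact .of_forall fun x hx => hx
  simpa only [withDensity_apply _ hS, setLIntegral_eq_zero_iff hS hf, Set.mem_ofPred_eq]
    using hac hgS

theorem MeasureTheory.Measure.map_absolutelyContinuous_and_rnDeriv_map_of_eq_withDensity_comp
    {α β : Type*} [MeasurableSpace α] [MeasurableSpace β] {μ ρ : Measure α} [IsFiniteMeasure μ]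
    {g : α → β} (hg : Measurable g) {φ : β → ℝ≥0∞} (hφ : Measurable φ)
    (hρ : ρ = μ.withDensity (φ ∘ g)) :
    ρ.map g ≪ μ.map g ∧ (ρ.map g).rnDeriv (μ.map g) =ᵐ[μ.map g] φ := by
  rw [hρ, Measure.map_withDensity_comp μ hg hφ]
  exact ⟨withDensity_absolutelyContinuous _ _, Measure.rnDeriv_withDensity _ hφ⟩

theorem div_div_one_sub_div_add {a b : ℝ} (hab : a + b ≠ 0) :
    a / (a + b) / (1 - a / (a + b)) = a / b := by
  rw [one_sub_div hab, add_sub_cancel_left, div_div_div_cancel_right₀ hab]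

theorem ENNReal.coe_mul_ofReal_div_coe {a b : ℝ≥0} (hb : b ≠ 0) :
    (b : ℝ≥0∞) * ENNReal.ofReal (a / b) = a := by
  rw [← NNReal.coe_div, ENNReal.ofReal_coe_nnreal, ← ENNReal.coe_mul, mul_div_cancel₀ _ hb]

theorem MeasureTheory.withDensity_coe_eq_withDensity_withDensity_odds {α : Type*}
    [MeasurableSpace α] {ν : Measure α} {f_p f_u : α → ℝ≥0} (hfp : Measurable f_p)
    (hfu : Measurable f_u)
    (hac : ν.withDensity (fun x => (f_p x : ℝ≥0∞)) ≪ ν.withDensity (fun x => (f_u x : ℝ≥0∞))) :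
    ν.withDensity (fun x => (f_p x : ℝ≥0∞)) =
      (ν.withDensity fun x => (f_u x : ℝ≥0∞)).withDensity fun x =>
        ENNReal.ofReal ((f_p x : ℝ) / (f_p x + f_u x) / (1 - f_p x / (f_p x + f_u x))) := by
  rw [← withDensity_mul _ (by fun_prop) (by fun_prop)]
  refine withDensity_congr_ae ?_
  filter_upwards [ae_imp_eq_zero_of_withDensity_absolutelyContinuous (by fun_prop) (by fun_prop)
    hac] with x hx
  rcases eq_or_ne (f_u x) 0 with h0 | h0
  · simp [h0, by simpa [h0] using hx]
  · have hsum : (f_p x : ℝ) + f_u x ≠ 0 := by positivity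
    rw [Pi.mul_apply, div_div_one_sub_div_add hsum, ENNReal.coe_mul_ofReal_div_coe h0]

theorem ntc_pushforward_density_ratio_general {X : Type*} [MeasurableSpace X]
    (ν : Measure X) (f_p f_u : X → ℝ≥0)
    (hfp : Measurable f_p) (hfu : Measurable f_u)
    (μp : Measure X) (hμp : μp = ν.withDensity fun x => (f_p x : ℝ≥0∞))
    (μu : Measure X) (hμu : μu = ν.withDensity fun x => (f_u x : ℝ≥0∞))
    [IsProbabilityMeasure μu] (hac : μp ≪ μu)
    (g : X → ℝ) (hg : g = fun x => (f_p x : ℝ) / ((f_p x : ℝ) + (f_u x : ℝ))) :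
    μp.map g ≪ μu.map g ∧
      ∀ᵐ y ∂(μu.map g),
        (μp.map g).rnDeriv (μu.map g) y = ENNReal.ofReal (y / (1 - y)) := by
  have hgm : Measurable g := by rw [hg]; fun_prop
  have hodds : Measurable fun y : ℝ => ENNReal.ofReal (y / (1 - y)) := by fun_prop
  have hμp_odds : μp = μu.withDensity ((fun y => ENNReal.ofReal (y / (1 - y))) ∘ g) := by
    subst hμp hμu hg
    exact withDensity_coe_eq_withDensity_withDensity_odds hfp hfu hac
  exact Measure.map_absolutelyContinuous_and_rnDeriv_map_of_eq_withDensity_comp hgm hodds hμp_odds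

/-- The paper's Lemma 1 instantiated at the Non-Traditional Classifier
`g x = f_p x / (f_p x + f_u x)`: the pushforward measures satisfy
`μp.map g ≪ μu.map g`, and the density ratio of the NTC predictions is
`y / (1 - y)` almost everywhere. -/
theorem ntc_pushforward_density_ratio {X : Type*} [MeasurableSpace X]
    (ν : Measure X) [SigmaFinite ν] (f_p f_u : X → ℝ≥0)
    (hfp : Measurable f_p) (hfu : Measurable f_u)
    (μp : Measure X) (hμp : μp = ν.withDensity fun x => (f_p x : ℝ≥0∞))
    (μu : Measure X) (hμu : μu = ν.withDensity fun x => (f_u x : ℝ≥0∞))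
    [IsProbabilityMeasure μp] [IsProbabilityMeasure μu] (hac : μp ≪ μu)
    (g : X → ℝ) (hg : g = fun x => (f_p x : ℝ) / ((f_p x : ℝ) + (f_u x : ℝ))) :
    μp.map g ≪ μu.map g ∧
      ∀ᵐ y ∂(μu.map g),
        (μp.map g).rnDeriv (μu.map g) y = ENNReal.ofReal (y / (1 - y)) :=
  ntc_pushforward_density_ratio_general ν f_p f_u hfp hfu μp hμp μu hμu hac g hg
end

section
/- Let μ_p and μ_u be probability measures on a measurable space X with μ_p ≪ μ_u, let g : X → Y be a measurable map into a measurable space Y, and let h : Y → ℝ≥0∞ be measurable with (dμ_p/dμ_u)(x) = h(g(x)) for μ_u-almost every x. Then for μ_u-almost every x ∈ X, d(μ_p.map g)/d(μ_u.map g)(g(x)) = (dμ_p/dμ_u)(x); in particular, for any α ∈ [0,1] the posterior α·(dμ_p/dμ_u)(x) computed in the original space coincides μ_u-almost everywhere with the posterior α·d(μ_p.map g)/d(μ_u.map g)(g(x)) computed from the transformed data. -/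
open MeasureTheory ENNReal

/-! If `dμ/dν = h ∘ g`, then `μ = ν.withDensity (h ∘ g)`, and the change of variables formula
turns this into `μ.map g = (ν.map g).withDensity h`; hence `d(μ.map g)/d(ν.map g) = h`
`ν.map g`-a.e., i.e. `d(μ.map g)/d(ν.map g) ∘ g = h ∘ g = dμ/dν` `ν`-a.e. -/

namespace MeasureTheory.Measure

variable {X Y : Type*} [MeasurableSpace X] [MeasurableSpace Y] {μ ν : Measure X} {g : X → Y}
  {h : Y → ℝ≥0∞}

theorem map_withDensity_comp_s2 (hg : Measurable g) (hh : Measurable h) :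
    (ν.withDensity (h ∘ g)).map g = (ν.map g).withDensity h := by
  ext s hs
  rw [map_apply hg hs, withDensity_apply _ hs, withDensity_apply _ (hg hs),
    setLIntegral_map hs hh hg, Function.comp_def]

theorem map_eq_withDensity_of_rnDeriv_eq_comp [μ.HaveLebesgueDecomposition ν] (hμν : μ ≪ ν)
    (hg : Measurable g) (hh : Measurable h) (hfac : μ.rnDeriv ν =ᵐ[ν] h ∘ g) :
    μ.map g = (ν.map g).withDensity h := by
  rw [← withDensity_rnDeriv_eq μ ν hμν, withDensity_congr_ae hfac, map_withDensity_comp_s2 hg hh]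

theorem rnDeriv_map_comp_ae_eq_of_rnDeriv_eq_comp [μ.HaveLebesgueDecomposition ν]
    [SigmaFinite (ν.map g)] (hμν : μ ≪ ν) (hg : Measurable g) (hh : Measurable h)
    (hfac : μ.rnDeriv ν =ᵐ[ν] h ∘ g) :
    (μ.map g).rnDeriv (ν.map g) ∘ g =ᵐ[ν] μ.rnDeriv ν := by
  have hmap : (μ.map g).rnDeriv (ν.map g) =ᵐ[ν.map g] h := by
    rw [map_eq_withDensity_of_rnDeriv_eq_comp hμν hg hh hfac]
    exact rnDeriv_withDensity _ hh
  exact (ae_eq_comp hg.aemeasurable hmap).trans hfac.symm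

end MeasureTheory.Measure

/-- Posterior preservation (part of the paper's Lemma 1): if the density ratio
`dμp/dμu` factors through `g`, then the density ratio of the pushforwards,
evaluated at `g x`, coincides `μu`-a.e. with the original density ratio; in
particular, for any prior `α ∈ [0,1]`, the posterior computed in the original
space coincides a.e. with the posterior computed from the transformed data. -/
theorem ntc_preserves_posteriors {X Y : Type*} [MeasurableSpace X] [MeasurableSpace Y]
    (μp μu : Measure X) [IsProbabilityMeasure μp] [IsProbabilityMeasure μu]
    (hac : μp ≪ μu) (g : X → Y) (hg : Measurable g) (h : Y → ℝ≥0∞) (hh : Measurable h)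
    (hfac : ∀ᵐ x ∂μu, μp.rnDeriv μu x = h (g x)) :
    (∀ᵐ x ∂μu, (μp.map g).rnDeriv (μu.map g) (g x) = μp.rnDeriv μu x) ∧
      ∀ α ∈ Set.Icc (0 : ℝ) 1,
        ∀ᵐ x ∂μu,
          ENNReal.ofReal α * μp.rnDeriv μu x
            = ENNReal.ofReal α * (μp.map g).rnDeriv (μu.map g) (g x) := by
  have hrn := Measure.rnDeriv_map_comp_ae_eq_of_rnDeriv_eq_comp hac hg hh hfac
  refine ⟨hrn, fun α _ => ?_⟩
  filter_upwards [hrn] with x hx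
  rw [← hx, Function.comp_apply]
end

section
/- If a ≥ 0 and a•μ_p ≤ μ_u, then ∫_X min(a·r(x), 1) dμ_u(x) = a; that is, D(a) = 0 for every valid mixing proportion a (the prior equals the expected clipped posterior). -/
open MeasureTheory ENNReal

/-- First part of the proof of the paper's Lemma 2: for every valid mixing
proportion `a` (i.e. `a ≥ 0` with `a • μp ≤ μu`), the expected clipped
posterior equals the prior, `∫ min (a * r x) 1 ∂μu = a`, i.e. `D a = 0`,
where `r` is the real-valued Radon–Nikodym derivative of `μp` w.r.t. `μu`. -/
theorem D_eq_zero_of_valid_prior {X : Type*} [MeasurableSpace X]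
    (μp μu : Measure X) [IsProbabilityMeasure μp] [IsProbabilityMeasure μu]
    (hac : μp ≪ μu) (r : X → ℝ) (hr : r = fun x => (μp.rnDeriv μu x).toReal)
    (a : ℝ) (ha : 0 ≤ a) (hle : ENNReal.ofReal a • μp ≤ μu) :
    ∫ x, min (a * r x) 1 ∂μu = a := by
  have h1 : (ENNReal.ofReal a • μp).rnDeriv μu ≤ᵐ[μu] 1 :=
    Measure.rnDeriv_le_one_of_le hle
  have h2 : (ENNReal.ofReal a • μp).rnDeriv μu =ᵐ[μu]
      ENNReal.ofReal a • μp.rnDeriv μu :=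
    Measure.rnDeriv_smul_left_of_ne_top μp μu ENNReal.ofReal_ne_top
  have hlt : ∀ᵐ x ∂μu, μp.rnDeriv μu x < ∞ := Measure.rnDeriv_lt_top μp μu
  have hmin : ∀ᵐ x ∂μu, min (a * r x) 1 = a * r x := by
    filter_upwards [h1, h2, hlt] with x hx1 hx2 hx3
    rw [hx2] at hx1
    have : ENNReal.ofReal a * μp.rnDeriv μu x ≤ 1 := hx1
    have h4 : a * r x ≤ 1 := by
      have := ENNReal.toReal_mono one_ne_top this
      rw [ENNReal.toReal_mul, ENNReal.toReal_ofReal ha, ENNReal.toReal_one] at this; rw [hr]; exact this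
    exact min_eq_left h4
  rw [integral_congr_ae hmin]
  simp_rw [integral_const_mul, hr]
  rw [Measure.integral_toReal_rnDeriv hac]
  simp
end

section
/- If a > 0 and a•μ_p ≤ μ_u does not hold, then ∫_X min(a·r(x), 1) dμ_u(x) < a; that is, D(a) > 0 for every invalid mixing proportion a (clipping strictly decreases the expected posterior below the prior). -/
open MeasureTheory ENNReal

/-!
Write `f = a * r`, so that `∫ f ∂μu = a` and `a • μp = μu.withDensity (ofReal ∘ f)`.
If `f ≤ 1` held `μu`-a.e., this would give `a • μp ≤ μu`; hence clipping at `1` changes `f`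
on a set of positive `μu`-measure, where it strictly decreases it, so `∫ min f 1 ∂μu < a`.
-/

namespace MeasureTheory

variable {X : Type*} [MeasurableSpace X] {μ ν : Measure X}

theorem Integrable.min_const {f : X → ℝ} (hf : Integrable f μ) {c : ℝ} (hc : 0 ≤ c) :
    Integrable (fun x => min (f x) c) μ := by
  refine hf.mono (hf.aestronglyMeasurable.inf aestronglyMeasurable_const) ?_
  refine Filter.Eventually.of_forall fun x => ?_
  simp only [Real.norm_eq_abs]
  rcases le_total (f x) c with h | h
  · rw [min_eq_left h]
  · rw [min_eq_right h, abs_of_nonneg hc, abs_of_nonneg (hc.trans h)]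
    exact h

theorem integral_min_const_lt {f : X → ℝ} (hf : Integrable f μ) {c : ℝ} (hc : 0 ≤ c)
    (hclip : μ {x | c < f x} ≠ 0) :
    ∫ x, min (f x) c ∂μ < ∫ x, f x ∂μ := by
  have hgap : 0 < ∫ x, (f x - min (f x) c) ∂μ := by
    rw [integral_pos_iff_support_of_nonneg_ae
      (Filter.Eventually.of_forall fun x => sub_nonneg.2 (min_le_left (f x) c))
      (hf.sub (hf.min_const hc))]
    refine (pos_iff_ne_zero.2 hclip).trans_le (measure_mono fun x (hx : c < f x) => ?_)
    simp [Function.mem_support, min_eq_right hx.le, sub_ne_zero.2 hx.ne']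
  rwa [integral_sub hf (hf.min_const hc), sub_pos] at hgap

namespace Measure

theorem smul_le_of_ae_mul_rnDeriv_le_one [μ.HaveLebesgueDecomposition ν] (hμν : μ ≪ ν)
    {c : ℝ≥0∞} (h : ∀ᵐ x ∂ν, c * μ.rnDeriv ν x ≤ 1) : c • μ ≤ ν :=
  calc c • μ = c • ν.withDensity (μ.rnDeriv ν) := by rw [withDensity_rnDeriv_eq _ _ hμν]
    _ = ν.withDensity (fun x => c * μ.rnDeriv ν x) :=
      (withDensity_smul _ (μ.measurable_rnDeriv ν)).symm
    _ ≤ ν.withDensity (fun _ => 1) := withDensity_mono h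
    _ = ν := withDensity_one

theorem measure_one_lt_mul_toReal_rnDeriv_ne_zero [SigmaFinite μ] [μ.HaveLebesgueDecomposition ν]
    (hμν : μ ≪ ν) {a : ℝ} (ha : 0 ≤ a) (hnle : ¬ ENNReal.ofReal a • μ ≤ ν) :
    ν {x | 1 < a * (μ.rnDeriv ν x).toReal} ≠ 0 := by
  contrapose! hnle
  refine smul_le_of_ae_mul_rnDeriv_le_one hμν ?_
  have hle : ∀ᵐ x ∂ν, a * (μ.rnDeriv ν x).toReal ≤ 1 := by
    simpa only [ae_iff, not_le] using hnle
  filter_upwards [hle, μ.rnDeriv_lt_top ν] with x hx hfin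
  rw [← ENNReal.ofReal_toReal hfin.ne, ← ENNReal.ofReal_mul ha, ← ENNReal.ofReal_one]
  exact ENNReal.ofReal_le_ofReal hx

end Measure

end MeasureTheory

/-- Second part of the proof of the paper's Lemma 2: for every invalid mixing
proportion `a` (i.e. `a > 0` such that `a • μp ≤ μu` fails), clipping strictly
decreases the expected posterior below the prior: `∫ min (a * r x) 1 ∂μu < a`,
i.e. `D a > 0`, where `r` is the real-valued Radon–Nikodym derivative. -/
theorem D_pos_of_invalid_prior {X : Type*} [MeasurableSpace X]
    (μp μu : Measure X) [IsProbabilityMeasure μp] [IsProbabilityMeasure μu]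
    (hac : μp ≪ μu) (r : X → ℝ) (hr : r = fun x => (μp.rnDeriv μu x).toReal)
    (a : ℝ) (ha : 0 < a) (hnle : ¬ ENNReal.ofReal a • μp ≤ μu) :
    ∫ x, min (a * r x) 1 ∂μu < a := by
  subst hr
  have hint : Integrable (fun x => a * (μp.rnDeriv μu x).toReal) μu :=
    Measure.integrable_toReal_rnDeriv.const_mul a
  have hmean : ∫ x, a * (μp.rnDeriv μu x).toReal ∂μu = a := by
    rw [integral_const_mul, Measure.integral_toReal_rnDeriv hac, probReal_univ, mul_one]
  calc ∫ x, min (a * (μp.rnDeriv μu x).toReal) 1 ∂μu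
      < ∫ x, a * (μp.rnDeriv μu x).toReal ∂μu :=
        integral_min_const_lt hint zero_le_one
          (Measure.measure_one_lt_mul_toReal_rnDeriv_ne_zero hac ha.le hnle)
    _ = a := hmean
end

section
/- sSup {a ∈ [0,1] : D(a) = 0} = α*; that is, the alternative estimate α_c*, defined as the largest proportion a ∈ [0,1] for which the prior equals the expected clipped posterior, coincides with the identifiable upper bound α* on the mixing proportion. -/
open MeasureTheory ENNReal

/-- The α_c* part of the paper's Lemma 2: the largest proportion `a ∈ [0,1]`
with `D a = 0` (prior equals expected clipped posterior) coincides with the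
identifiable upper bound `α* = sSup {a ∈ [0,1] : a • μp ≤ μu}` on the mixing
proportion, where `D a = a - ∫ min (a * r x) 1 ∂μu` and `r` is the real-valued
Radon–Nikodym derivative of `μp` with respect to `μu`. -/
theorem alpha_c_star_eq_alpha_star {X : Type*} [MeasurableSpace X]
    (μp μu : Measure X) [IsProbabilityMeasure μp] [IsProbabilityMeasure μu]
    (hac : μp ≪ μu) (r : X → ℝ) (hr : r = fun x => (μp.rnDeriv μu x).toReal)
    (D : ℝ → ℝ) (hD : ∀ a, D a = a - ∫ x, min (a * r x) 1 ∂μu) :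
    sSup {a : ℝ | a ∈ Set.Icc (0 : ℝ) 1 ∧ D a = 0}
      = sSup {a : ℝ | a ∈ Set.Icc (0 : ℝ) 1 ∧ ENNReal.ofReal a • μp ≤ μu} := by
  subst hr
  have hrint : Integrable (fun x => (μp.rnDeriv μu x).toReal) μu :=
    Measure.integrable_toReal_rnDeriv
  have hintval : ∫ x, (μp.rnDeriv μu x).toReal ∂μu = 1 := by
    rw [Measure.integral_toReal_rnDeriv hac]; simp
  have key : ∀ a : ℝ, a ∈ Set.Icc (0:ℝ) 1 →
      ((D a = 0) ↔ (ENNReal.ofReal a • μp ≤ μu)) := by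
    rintro a ⟨ha0, _⟩
    have hfin : ∀ᵐ x ∂μu, μp.rnDeriv μu x < ∞ := μp.rnDeriv_lt_top μu
    have hminint : Integrable (fun x => min (a * (μp.rnDeriv μu x).toReal) 1) μu :=
      (hrint.const_mul a).inf (integrable_const 1)
    have hiff1 : D a = 0 ↔ ∀ᵐ x ∂μu, a * (μp.rnDeriv μu x).toReal ≤ 1 := by
      constructor
      · intro h
        have hD0 : ∫ x, min (a * (μp.rnDeriv μu x).toReal) 1 ∂μu = a := by
          have := hD a; rw [h] at this; linarith
        have hg : ∫ x, (a * (μp.rnDeriv μu x).toReal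
            - min (a * (μp.rnDeriv μu x).toReal) 1) ∂μu = 0 := by
          rw [integral_sub (hrint.const_mul a) hminint, integral_const_mul, hintval, hD0]
          ring
        have h0 : (fun x => a * (μp.rnDeriv μu x).toReal
            - min (a * (μp.rnDeriv μu x).toReal) 1) =ᵐ[μu] 0 := by
          exact (integral_eq_zero_iff_of_nonneg
            (fun x => by simp [min_le_left])
            ((hrint.const_mul a).sub hminint)).mp hg
        filter_upwards [h0] with x hx
        simp only [Pi.zero_apply, sub_eq_zero] at hx
        exact min_eq_left_iff.mp hx.symm
      · intro h
        have : ∫ x, min (a * (μp.rnDeriv μu x).toReal) 1 ∂μu = a := by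
          have : ∫ x, min (a * (μp.rnDeriv μu x).toReal) 1 ∂μu
              = ∫ x, a * (μp.rnDeriv μu x).toReal ∂μu := by
            refine integral_congr_ae ?_
            filter_upwards [h] with x hx
            exact min_eq_left hx
          rw [this, integral_const_mul, hintval, mul_one]
        rw [hD a, this, sub_self]
    have hiff2 : (ENNReal.ofReal a • μp ≤ μu)
        ↔ ∀ᵐ x ∂μu, a * (μp.rnDeriv μu x).toReal ≤ 1 := by
      rw [← Measure.rnDeriv_le_one_iff_le (hac.smul_left _)]
      have hsm := Measure.rnDeriv_smul_left_of_ne_top μp μu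
        (r := ENNReal.ofReal a) ofReal_ne_top
      constructor
      · intro h
        filter_upwards [h, hsm, hfin] with x hx hx2 hx3
        rw [hx2] at hx
        simp only [Pi.smul_apply, smul_eq_mul, Pi.one_apply] at hx
        calc a * (μp.rnDeriv μu x).toReal
            = (ENNReal.ofReal a * μp.rnDeriv μu x).toReal := by
              rw [ENNReal.toReal_mul, ENNReal.toReal_ofReal ha0]
          _ ≤ (1 : ℝ≥0∞).toReal := ENNReal.toReal_mono one_ne_top hx
          _ = 1 := ENNReal.toReal_one
      · intro h
        filter_upwards [h, hsm, hfin] with x hx hx2 hx3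
        rw [hx2]
        simp only [Pi.smul_apply, smul_eq_mul, Pi.one_apply]
        calc ENNReal.ofReal a * μp.rnDeriv μu x
            = ENNReal.ofReal (a * (μp.rnDeriv μu x).toReal) := by
              rw [ENNReal.ofReal_mul ha0, ENNReal.ofReal_toReal hx3.ne]
          _ ≤ ENNReal.ofReal 1 := ENNReal.ofReal_le_ofReal hx
          _ = 1 := ENNReal.ofReal_one
    exact hiff1.trans hiff2.symm
  congr 1
  ext a
  simp only [Set.mem_setOf_eq]
  exact and_congr_right (key a)
end

section
/- Assume α* > 0. Then sInf {a ∈ [0,1] : for every ε > 0, D(a+ε) − 2·D(a) + D(max(a−ε, 0)) > 0} = α*; that is, the alternative estimate α_n*, defined as the smallest proportion at which every second difference of D is strictly positive, coincides with the identifiable upper bound α* on the mixing proportion. -/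
/-!
Since `∫ r ∂μu = 1`, we have `D a = ∫ (a * r - 1)⁺ ∂μu ≥ 0`, and `D a = 0` iff
`a * r ≤ 1` `μu`-a.e., i.e. iff `a • μp ≤ μu`. The set of such `a ≥ 0` is closed and
downward closed, hence equal to `[0, α*]`: `D` vanishes on `[0, α*]` and is positive beyond.
Below `α*` a small second difference of `D` is `0`; at `α*` every second difference is
`D (α* + ε) > 0`.
-/

open MeasureTheory ENNReal

lemma sInf_setOf_secondDiff_pos_eq {D : ℝ → ℝ} {α : ℝ} (hα : α ∈ Set.Icc (0 : ℝ) 1)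
    (hzero : ∀ a, 0 ≤ a → a ≤ α → D a = 0) (hpos : ∀ a, α < a → 0 < D a) :
    sInf {a : ℝ | a ∈ Set.Icc (0 : ℝ) 1 ∧
        ∀ ε > (0 : ℝ), D (a + ε) - 2 * D a + D (max (a - ε) 0) > 0} = α := by
  refine IsLeast.csInf_eq ⟨⟨hα, fun ε hε => ?_⟩, fun a ⟨ha, hdiff⟩ => ?_⟩
  · have hleft : D (max (α - ε) 0) = 0 :=
      hzero _ (le_max_right _ _) (max_le (by linarith) hα.1)
    rw [hzero α hα.1 le_rfl, hleft]
    linarith [hpos (α + ε) (by linarith)]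
  · by_contra! haα
    have hε : 0 < (α - a) / 2 := by linarith
    have hsecond := hdiff _ hε
    rw [hzero _ (by linarith [ha.1]) (by linarith), hzero a ha.1 haα.le,
      hzero _ (le_max_right _ _) (max_le (by linarith) hα.1)] at hsecond
    linarith

section PositivePart

variable {X : Type*} [MeasurableSpace X] {μ : Measure X} [IsFiniteMeasure μ] {g : X → ℝ}

lemma integral_sub_integral_min_one (hg : Integrable g μ) :
    ∫ x, g x ∂μ - ∫ x, min (g x) 1 ∂μ = ∫ x, max (g x - 1) 0 ∂μ := by
  have hmin : Integrable (fun x => min (g x) 1) μ := hg.inf (integrable_const 1)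
  rw [← integral_sub hg hmin]
  congr 1 with x
  rcases le_total (g x) 1 with h | h <;> simp [h]

lemma integral_max_sub_one_zero_eq_zero_iff (hg : Integrable g μ) :
    ∫ x, max (g x - 1) 0 ∂μ = 0 ↔ ∀ᵐ x ∂μ, g x ≤ 1 := by
  have hint : Integrable (fun x => max (g x - 1) 0) μ :=
    (hg.sub (integrable_const 1)).sup (integrable_const 0)
  rw [integral_eq_zero_iff_of_nonneg (fun x => le_max_right (g x - 1) 0) hint]
  refine Filter.eventually_congr (Filter.Eventually.of_forall fun x => ?_)
  simp

end PositivePart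

namespace MeasureTheory.Measure

variable {X : Type*} [MeasurableSpace X]

lemma isClosed_setOf_ofReal_smul_le (μ ν : Measure X) [IsFiniteMeasure μ] :
    IsClosed {a : ℝ | ENNReal.ofReal a • μ ≤ ν} := by
  simp_rw [le_iff', smul_apply, smul_eq_mul, Set.ofPred_forall]
  exact isClosed_iInter fun s =>
    isClosed_le ((ENNReal.continuous_mul_const (measure_ne_top μ s)).comp continuous_ofReal)
      continuous_const

lemma ofReal_smul_le_iff_ae_mul_toReal_rnDeriv_le {μ ν : Measure X} [IsFiniteMeasure μ]
    [SigmaFinite ν] (hμν : μ ≪ ν) {a : ℝ} (ha : 0 ≤ a) :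
    ENNReal.ofReal a • μ ≤ ν ↔ ∀ᵐ x ∂ν, a * (μ.rnDeriv ν x).toReal ≤ 1 := by
  rw [← rnDeriv_le_one_iff_le (hμν.smul_left _)]
  refine Filter.eventually_congr ?_
  filter_upwards [rnDeriv_smul_left_of_ne_top μ ν ofReal_ne_top, μ.rnDeriv_lt_top ν]
    with x hsmul hfin
  have hmul :
      ENNReal.ofReal a * μ.rnDeriv ν x = ENNReal.ofReal (a * (μ.rnDeriv ν x).toReal) := by
    rw [ofReal_mul ha, ofReal_toReal hfin.ne]
  rw [hsmul, Pi.smul_apply, smul_eq_mul, Pi.one_apply, hmul, ofReal_le_one]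

lemma sub_integral_min_mul_toReal_rnDeriv {μ ν : Measure X} [IsProbabilityMeasure μ]
    [IsFiniteMeasure ν] (hμν : μ ≪ ν) (a : ℝ) :
    a - ∫ x, min (a * (μ.rnDeriv ν x).toReal) 1 ∂ν
      = ∫ x, max (a * (μ.rnDeriv ν x).toReal - 1) 0 ∂ν := by
  have hint : Integrable (fun x => a * (μ.rnDeriv ν x).toReal) ν :=
    integrable_toReal_rnDeriv.const_mul a
  rw [← integral_sub_integral_min_one hint, integral_const_mul, integral_toReal_rnDeriv hμν,
    probReal_univ, mul_one]

lemma ofReal_smul_le_iff_le_sSup (μ ν : Measure X) [IsProbabilityMeasure μ]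
    [IsProbabilityMeasure ν] {a : ℝ} (ha : 0 ≤ a) :
    ENNReal.ofReal a • μ ≤ ν ↔
      a ≤ sSup {a : ℝ | a ∈ Set.Icc (0 : ℝ) 1 ∧ ENNReal.ofReal a • μ ≤ ν} := by
  set S := {a : ℝ | a ∈ Set.Icc (0 : ℝ) 1 ∧ ENNReal.ofReal a • μ ≤ ν}
  have hbdd : BddAbove S := ⟨1, fun b hb => hb.1.2⟩
  constructor
  · intro h
    have ha1 : a ≤ 1 := by simpa using le_iff'.1 h Set.univ
    exact le_csSup hbdd ⟨⟨ha, ha1⟩, h⟩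
  · intro haS
    have hS : sSup S ∈ S :=
      (isClosed_Icc.inter (isClosed_setOf_ofReal_smul_le μ ν)).csSup_mem
        ⟨0, ⟨le_rfl, zero_le_one⟩, by simp [Measure.zero_le]⟩ hbdd
    exact (IsOrderedSMul.smul_le_smul_right _ _ (ofReal_le_ofReal haS) μ).trans hS.2

end MeasureTheory.Measure

theorem alpha_n_star_eq_alpha_star_general {X : Type*} [MeasurableSpace X]
    (μp μu : Measure X) [IsProbabilityMeasure μp] [IsProbabilityMeasure μu]
    (hac : μp ≪ μu) (r : X → ℝ) (hr : r = fun x => (μp.rnDeriv μu x).toReal)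
    (D : ℝ → ℝ) (hD : ∀ a, D a = a - ∫ x, min (a * r x) 1 ∂μu) :
    sInf {a : ℝ | a ∈ Set.Icc (0 : ℝ) 1 ∧
        ∀ ε > (0 : ℝ), D (a + ε) - 2 * D a + D (max (a - ε) 0) > 0}
      = sSup {a : ℝ | a ∈ Set.Icc (0 : ℝ) 1 ∧ ENNReal.ofReal a • μp ≤ μu} := by
  subst hr
  set α := sSup {a : ℝ | a ∈ Set.Icc (0 : ℝ) 1 ∧ ENNReal.ofReal a • μp ≤ μu}
  have hD_eq : ∀ a, D a = ∫ x, max (a * (μp.rnDeriv μu x).toReal - 1) 0 ∂μu := fun a => by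
    rw [hD, Measure.sub_integral_min_mul_toReal_rnDeriv hac]
  have hD_eq_zero_iff : ∀ a, 0 ≤ a → (D a = 0 ↔ a ≤ α) := fun a ha => by
    rw [hD_eq, integral_max_sub_one_zero_eq_zero_iff
        (Measure.integrable_toReal_rnDeriv.const_mul a),
      ← Measure.ofReal_smul_le_iff_ae_mul_toReal_rnDeriv_le hac ha,
      Measure.ofReal_smul_le_iff_le_sSup μp μu ha]
  have hD_nonneg : ∀ a, 0 ≤ D a := fun a => by
    rw [hD_eq]
    exact integral_nonneg fun x => le_max_right _ _
  have hα : α ∈ Set.Icc (0 : ℝ) 1 :=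
    ⟨Real.sSup_nonneg fun a ha => ha.1.1, Real.sSup_le (fun a ha => ha.1.2) zero_le_one⟩
  refine sInf_setOf_secondDiff_pos_eq hα (fun a ha haα => (hD_eq_zero_iff a ha).2 haα)
    fun a haα => (hD_nonneg a).lt_of_ne' fun hDa => ?_
  exact haα.not_ge ((hD_eq_zero_iff a (hα.1.trans haα.le)).1 hDa)

/-- The α_n* part of the paper's Lemma 2: assuming `α* > 0`, the smallest
proportion `a ∈ [0,1]` at which every second difference of `D` is strictly
positive coincides with the identifiable upper bound
`α* = sSup {a ∈ [0,1] : a • μp ≤ μu}` on the mixing proportion, where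
`D a = a - ∫ min (a * r x) 1 ∂μu` and `r` is the real-valued Radon–Nikodym
derivative of `μp` with respect to `μu`. -/
theorem alpha_n_star_eq_alpha_star {X : Type*} [MeasurableSpace X]
    (μp μu : Measure X) [IsProbabilityMeasure μp] [IsProbabilityMeasure μu]
    (hac : μp ≪ μu) (r : X → ℝ) (hr : r = fun x => (μp.rnDeriv μu x).toReal)
    (D : ℝ → ℝ) (hD : ∀ a, D a = a - ∫ x, min (a * r x) 1 ∂μu)
    (hpos : 0 < sSup {a : ℝ | a ∈ Set.Icc (0 : ℝ) 1 ∧ ENNReal.ofReal a • μp ≤ μu}) :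
    sInf {a : ℝ | a ∈ Set.Icc (0 : ℝ) 1 ∧
        ∀ ε > (0 : ℝ), D (a + ε) - 2 * D a + D (max (a - ε) 0) > 0}
      = sSup {a : ℝ | a ∈ Set.Icc (0 : ℝ) 1 ∧ ENNReal.ofReal a • μp ≤ μu} :=
  alpha_n_star_eq_alpha_star_general μp μu hac r hr D hD
end

section
/- Assume μ_p ≪ μ_u. Then (α* : ℝ≥0∞) equals the μ_u-essential infimum of the function x ↦ ((dμ_p/dμ_u)(x))⁻¹ (the ℝ≥0∞-valued inverse of the Radon–Nikodym derivative); in particular this essential infimum is at most 1. -/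
open MeasureTheory ENNReal

/-- The paper's Eq. (4): assuming `μp ≪ μu`, the identifiable upper bound
`α* = sSup {a ∈ [0,1] : a • μp ≤ μu}` equals the `μu`-essential infimum of the
inverse of the Radon–Nikodym derivative `dμp/dμu` (the density ratio
`f_u / f_p`); in particular this essential infimum is at most `1`. -/
theorem alpha_star_eq_essInf_inv_rnDeriv {X : Type*} [MeasurableSpace X]
    (μp μu : Measure X) [IsProbabilityMeasure μp] [IsProbabilityMeasure μu]
    (hac : μp ≪ μu) :
    ENNReal.ofReal (sSup {a : ℝ | a ∈ Set.Icc (0 : ℝ) 1 ∧ ENNReal.ofReal a • μp ≤ μu})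
        = essInf (fun x => (μp.rnDeriv μu x)⁻¹) μu ∧
      essInf (fun x => (μp.rnDeriv μu x)⁻¹) μu ≤ 1 := by
  set f := μp.rnDeriv μu with hf
  set E := essInf (fun x => (f x)⁻¹) μu with hE
  set S := {a : ℝ | a ∈ Set.Icc (0 : ℝ) 1 ∧ ENNReal.ofReal a • μp ≤ μu} with hS
  have hfmeas : Measurable f := Measure.measurable_rnDeriv μp μu
  -- a.e. essInf ≤ f⁻¹
  have hae : ∀ᵐ x ∂μu, E ≤ (f x)⁻¹ := ae_essInf_le
  have hEf : ∀ᵐ x ∂μu, E * f x ≤ 1 := by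
    filter_upwards [hae] with x hx
    exact ENNReal.le_inv_iff_mul_le.mp hx
  -- E ≤ 1
  have hlint : ∫⁻ x, f x ∂μu = 1 := by
    rw [Measure.lintegral_rnDeriv hac, measure_univ]
  have hE1 : E ≤ 1 := by
    calc E = E * ∫⁻ x, f x ∂μu := by rw [hlint, mul_one]
    _ = ∫⁻ x, E * f x ∂μu := (lintegral_const_mul E hfmeas).symm
    _ ≤ ∫⁻ _, 1 ∂μu := lintegral_mono_ae hEf
    _ = 1 := by simp
  have hEtop : E ≠ ∞ := (hE1.trans_lt one_lt_top).ne
  -- E • μp ≤ μu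
  have hEle : E • μp ≤ μu := by
    refine Measure.le_iff.mpr fun s hs => ?_
    have h1 : (E • μp) s = ∫⁻ x in s, E * f x ∂μu := by
      rw [Measure.smul_apply, smul_eq_mul,
        ← Measure.setLIntegral_rnDeriv hac s, lintegral_const_mul E hfmeas]
    rw [h1]
    calc ∫⁻ x in s, E * f x ∂μu ≤ ∫⁻ _ in s, 1 ∂μu :=
          lintegral_mono_ae (ae_restrict_of_ae hEf)
    _ = μu s := by rw [setLIntegral_one]
    _ ≤ μu s := le_rfl
  -- Every element of S is ≤ E (as ENNReal)
  have hmem_le : ∀ a ∈ S, ENNReal.ofReal a ≤ E := by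
    rintro a ⟨⟨ha0, ha1⟩, hle⟩
    have h1 : ENNReal.ofReal a • μp = μu.withDensity (fun x => ENNReal.ofReal a * f x) := by
      rw [← Measure.withDensity_rnDeriv_eq μp μu hac, ← withDensity_smul _ hfmeas]
      rfl
    have h2 : ∀ᵐ x ∂μu, ENNReal.ofReal a * f x ≤ 1 := by
      refine ae_le_of_forall_setLIntegral_le_of_sigmaFinite
        (measurable_const.mul hfmeas) fun s hs _ => ?_
      have : ∫⁻ x in s, ENNReal.ofReal a * f x ∂μu = (ENNReal.ofReal a • μp) s := by
        rw [h1, withDensity_apply _ hs]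
      rw [this]
      calc (ENNReal.ofReal a • μp) s ≤ μu s := hle s
      _ = ∫⁻ _ in s, 1 ∂μu := (setLIntegral_one s).symm
    refine le_essInf_of_ae_le _ ?_
    filter_upwards [h2] with x hx
    exact ENNReal.le_inv_iff_mul_le.mpr hx
  -- E.toReal ∈ S
  have hEtoReal_mem : E.toReal ∈ S := by
    refine ⟨⟨ENNReal.toReal_nonneg, ?_⟩, ?_⟩
    · have := ENNReal.toReal_mono one_ne_top hE1
      simpa using this
    · rwa [ENNReal.ofReal_toReal hEtop]
  have hbdd : BddAbove S := ⟨1, fun a ha => ha.1.2⟩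
  have hsup : sSup S = E.toReal := by
    refine le_antisymm (csSup_le ⟨E.toReal, hEtoReal_mem⟩ fun a ha => ?_)
      (le_csSup hbdd hEtoReal_mem)
    have := ENNReal.toReal_mono hEtop (hmem_le a ha)
    rwa [ENNReal.toReal_ofReal ha.1.1] at this
  refine ⟨?_, hE1⟩
  rw [hsup, ENNReal.ofReal_toReal hEtop]
end

section
/- For μ_u-almost every x ∈ X, the Radon–Nikodym derivative satisfies (dμ_p/dμ_u)(x) = ENNReal.ofReal(g(x)/(1−g(x))); that is, the density ratio of the positive to the unlabeled distribution factors through the NTC as the function y ↦ y/(1−y). -/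
/-!
Both measures have densities with respect to `ν`, so `dμp/dμu = (dμp/dν) / (dμu/dν) = f_p / f_u`
holds `μu`-almost everywhere, and `f_u ≠ 0` there. Since `1 - g = f_u / (f_p + f_u)`, the odds
`g / (1 - g)` are exactly `f_p / f_u`.
-/

open MeasureTheory ENNReal NNReal

section WithDensity

variable {X : Type*} [MeasurableSpace X] {ν : Measure X}

theorem ae_ne_zero_withDensity {f : X → ℝ≥0∞} (hf : Measurable f) :
    ∀ᵐ x ∂ν.withDensity f, f x ≠ 0 :=
  (ae_withDensity_iff hf).2 (ae_of_all _ fun _ hx => hx)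

theorem rnDeriv_withDensity_withDensity [SigmaFinite ν] {f g : X → ℝ≥0}
    (hf : Measurable f) (hg : Measurable g) :
    (ν.withDensity fun x => (f x : ℝ≥0∞)).rnDeriv (ν.withDensity fun x => (g x : ℝ≥0∞))
      =ᵐ[ν.withDensity fun x => (g x : ℝ≥0∞)] fun x => (f x : ℝ≥0∞) / g x := by
  have hgν := withDensity_absolutelyContinuous ν fun x => (g x : ℝ≥0∞)
  have hfν := withDensity_absolutelyContinuous ν fun x => (f x : ℝ≥0∞)
  filter_upwards [Measure.rnDeriv_eq_div hfν hgν,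
    hgν (Measure.rnDeriv_withDensity ν hf.coe_nnreal_ennreal),
    hgν (Measure.rnDeriv_withDensity ν hg.coe_nnreal_ennreal)] with x hx hfx hgx
  rw [hx, hfx, hgx]

end WithDensity

theorem div_add_div_one_sub_div_add {K : Type*} [Field K] {a b : K} (hab : a + b ≠ 0) :
    a / (a + b) / (1 - a / (a + b)) = a / b := by
  rw [one_sub_div hab, add_sub_cancel_left, div_div_div_cancel_right₀ hab]

theorem ofReal_div_coe_nnreal {a b : ℝ≥0} (hb : b ≠ 0) :
    ENNReal.ofReal ((a : ℝ) / b) = (a : ℝ≥0∞) / b := by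
  rw [← NNReal.coe_div, ENNReal.ofReal_coe_nnreal, ENNReal.coe_div hb]

theorem rnDeriv_eq_ntc_odds_general {X : Type*} [MeasurableSpace X]
    (ν : Measure X) [SigmaFinite ν] (f_p f_u : X → ℝ≥0)
    (hfp : Measurable f_p) (hfu : Measurable f_u)
    (μp : Measure X) (hμp : μp = ν.withDensity fun x => (f_p x : ℝ≥0∞))
    (μu : Measure X) (hμu : μu = ν.withDensity fun x => (f_u x : ℝ≥0∞))
    (g : X → ℝ) (hg : g = fun x => (f_p x : ℝ) / ((f_p x : ℝ) + (f_u x : ℝ))) :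
    ∀ᵐ x ∂μu, μp.rnDeriv μu x = ENNReal.ofReal (g x / (1 - g x)) := by
  subst hμp hμu hg
  filter_upwards [rnDeriv_withDensity_withDensity hfp hfu,
    ae_ne_zero_withDensity hfu.coe_nnreal_ennreal] with x hx hx0
  have hu : f_u x ≠ 0 := by exact_mod_cast hx0
  have hsum : (f_p x : ℝ) + f_u x ≠ 0 := by positivity
  rw [hx, div_add_div_one_sub_div_add hsum, ofReal_div_coe_nnreal hu]

/-- The paper's Eqs. (7)–(8): the density ratio of the positive to the
unlabeled distribution factors through the Non-Traditional Classifier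
`g x = f_p x / (f_p x + f_u x)` as the function `y ↦ y / (1 - y)`:
for `μu`-almost every `x`, `(dμp/dμu)(x) = g x / (1 - g x)`. -/
theorem rnDeriv_eq_ntc_odds {X : Type*} [MeasurableSpace X]
    (ν : Measure X) [SigmaFinite ν] (f_p f_u : X → ℝ≥0)
    (hfp : Measurable f_p) (hfu : Measurable f_u)
    (μp : Measure X) (hμp : μp = ν.withDensity fun x => (f_p x : ℝ≥0∞))
    (μu : Measure X) (hμu : μu = ν.withDensity fun x => (f_u x : ℝ≥0∞))
    [IsProbabilityMeasure μp] [IsProbabilityMeasure μu] (hac : μp ≪ μu)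
    (g : X → ℝ) (hg : g = fun x => (f_p x : ℝ) / ((f_p x : ℝ) + (f_u x : ℝ))) :
    ∀ᵐ x ∂μu, μp.rnDeriv μu x = ENNReal.ofReal (g x / (1 - g x)) :=
  rnDeriv_eq_ntc_odds_general ν f_p f_u hfp hfu μp hμp μu hμu g hg
end
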